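/- arXiv:1301.4086 — 5 statements merged into one kernel-verified Lean document; each statement's English description precedes it below -/
import Mathlib

section
/- For 2 < p < ∞, every bounded linear operator from ℓ_p (over a countably infinite index set) into a Hilbert space is compact. -/
/-!
Let `P_s = lp.restrictCLM E p s` be the coordinate projection of `ℓ_p` onto a finite set `s` of
indices and `a_s = ‖T (1 - P_s)‖`. The numbers `a_s` decrease to some `a ≥ 0`, and if `a = 0`
then `T` is the norm limit of the finite-rank operators `T P_s`, hence compact.
Given `c < a`, there are vectors `u`, `v` of norm `≤ 1`, vanishing on `s`, with disjoint
supports and `‖T u‖, ‖T v‖ > c`. In `ℓ_p` disjointness gives `‖u ± v‖ ≤ 2^{1/p}`, while in the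
Hilbert space the parallelogram law gives `‖T u + T v‖² + ‖T u - T v‖² > 4c²`. Hence
`√2 c ≤ 2^{1/p} a_s` for all `s`, so `a ≤ 2^{1/p - 1/2} a`, which forces `a = 0` when `p > 2`.
-/

open scoped ENNReal
open Filter Topology

namespace lp

variable {α : Type*} {E : α → Type*} [∀ i, NormedAddCommGroup (E i)] {p : ℝ≥0∞}

theorem norm_add_rpow_of_disjoint (hp : 0 < p.toReal) {f g : lp E p}
    (hfg : ∀ i, f i = 0 ∨ g i = 0) :
    ‖f + g‖ ^ p.toReal = ‖f‖ ^ p.toReal + ‖g‖ ^ p.toReal := by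
  refine (hasSum_norm hp (f + g)).unique <|
    ((hasSum_norm hp f).add (hasSum_norm hp g)).congr_fun fun i => ?_
  rcases hfg i with h | h <;> simp [h, Real.zero_rpow hp.ne']

theorem norm_add_le_of_disjoint (hp : 0 < p.toReal) {f g : lp E p}
    (hfg : ∀ i, f i = 0 ∨ g i = 0) (hf : ‖f‖ ≤ 1) (hg : ‖g‖ ≤ 1) :
    ‖f + g‖ ≤ 2 ^ p.toReal⁻¹ := by
  have hsum : ‖f + g‖ ^ p.toReal ≤ 2 := by
    rw [norm_add_rpow_of_disjoint hp hfg, ← one_add_one_eq_two]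
    gcongr
    · exact Real.rpow_le_one (norm_nonneg' f) hf hp.le
    · exact Real.rpow_le_one (norm_nonneg' g) hg hp.le
  calc ‖f + g‖ = (‖f + g‖ ^ p.toReal) ^ p.toReal⁻¹ :=
        (Real.rpow_rpow_inv (norm_nonneg' (f + g)) hp.ne').symm
    _ ≤ 2 ^ p.toReal⁻¹ := by gcongr; exact Real.rpow_nonneg (norm_nonneg' (f + g)) _

variable [DecidableEq α] [∀ i, NormedSpace ℝ (E i)] [Fact (1 ≤ p)]

variable (E p) in
noncomputable def restrictCLM (s : Finset α) : lp E p →L[ℝ] lp E p :=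
  ∑ i ∈ s, (singleContinuousLinearMap ℝ E p i).comp (evalCLM ℝ E p i)

theorem restrictCLM_apply (s : Finset α) (f : lp E p) :
    restrictCLM E p s f = ∑ i ∈ s, lp.single p i (f i) := by
  simp [restrictCLM, evalCLM]

theorem restrictCLM_apply_apply (s : Finset α) (f : lp E p) (i : α) :
    restrictCLM E p s f i = if i ∈ s then f i else 0 := by
  simp only [restrictCLM_apply, lp.coeFn_sum, lp.coeFn_single, Finset.sum_apply,
    Finset.sum_pi_single]

theorem restrictCLM_apply_apply_of_mem {s : Finset α} {i : α} (hi : i ∈ s) (f : lp E p) :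
    restrictCLM E p s f i = f i := by
  rw [restrictCLM_apply_apply, if_pos hi]

theorem restrictCLM_apply_apply_of_notMem {s : Finset α} {i : α} (hi : i ∉ s) (f : lp E p) :
    restrictCLM E p s f i = 0 := by
  rw [restrictCLM_apply_apply, if_neg hi]

theorem restrictCLM_apply_eq_zero {s : Finset α} {f : lp E p} (hf : ∀ i ∈ s, f i = 0) :
    restrictCLM E p s f = 0 := by
  ext i
  by_cases hi : i ∈ s
  · rw [restrictCLM_apply_apply_of_mem hi, hf i hi]; rfl
  · rw [restrictCLM_apply_apply_of_notMem hi]; rfl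

theorem sub_restrictCLM_apply_apply_of_mem {s : Finset α} {i : α} (hi : i ∈ s) (f : lp E p) :
    (f - restrictCLM E p s f) i = 0 := by
  rw [coeFn_sub, Pi.sub_apply, restrictCLM_apply_apply_of_mem hi, sub_self]

theorem norm_restrictCLM_apply_le (hp : p ≠ ⊤) (s : Finset α) (f : lp E p) :
    ‖restrictCLM E p s f‖ ≤ ‖f‖ := by
  have hp₀ : 0 < p.toReal := ENNReal.toReal_pos (zero_lt_one.trans_le Fact.out).ne' hp
  refine (Real.rpow_le_rpow_iff (norm_nonneg _) (norm_nonneg _) hp₀).1 ?_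
  rw [restrictCLM_apply, lp.norm_sum_single hp₀, lp.norm_rpow_eq_tsum hp₀]
  exact (hasSum_norm hp₀ f).summable.sum_le_tsum s fun i _ => by positivity

theorem norm_sub_restrictCLM_apply_le (hp : p ≠ ⊤) (s : Finset α) (f : lp E p) :
    ‖f - restrictCLM E p s f‖ ≤ ‖f‖ := by
  have hp₀ : 0 < p.toReal := ENNReal.toReal_pos (zero_lt_one.trans_le Fact.out).ne' hp
  refine (Real.rpow_le_rpow_iff (norm_nonneg _) (norm_nonneg _) hp₀).1 ?_
  rw [restrictCLM_apply, lp.norm_compl_sum_single hp₀]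
  exact sub_le_self _ (Finset.sum_nonneg fun i _ => by positivity)

theorem tendsto_restrictCLM_apply (hp : p ≠ ⊤) (f : lp E p) :
    Tendsto (fun s => restrictCLM E p s f) atTop (𝓝 f) := by
  simp only [restrictCLM_apply]
  exact lp.hasSum_single hp f

theorem isCompactOperator_restrictCLM [∀ i, FiniteDimensional ℝ (E i)] (s : Finset α) :
    IsCompactOperator (restrictCLM E p s) := by
  rw [restrictCLM]
  induction s using Finset.induction with
  | empty => simpa using isCompactOperator_zero
  | insert i s hi ih =>
    rw [Finset.sum_insert hi, FunLike.coe_add]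
    exact ((isCompactOperator_of_locallyCompactSpace_dom (evalCLM ℝ E p i)).clm_comp
      (singleContinuousLinearMap ℝ E p i)).add ih

end lp

section OperatorNormOnTails

open lp

variable {α : Type*} [DecidableEq α] {E : α → Type*} [∀ i, NormedAddCommGroup (E i)]
  [∀ i, NormedSpace ℝ (E i)] {p : ℝ≥0∞} [Fact (1 ≤ p)]

section Normed

variable {F : Type*} [NormedAddCommGroup F] [NormedSpace ℝ F]

theorem norm_apply_le_norm_comp_one_sub_restrictCLM (T : lp E p →L[ℝ] F) {s : Finset α}
    {f : lp E p} (hf : ∀ i ∈ s, f i = 0) :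
    ‖T f‖ ≤ ‖T ∘L (1 - restrictCLM E p s)‖ * ‖f‖ := by
  calc ‖T f‖ = ‖(T ∘L (1 - restrictCLM E p s)) f‖ := by simp [restrictCLM_apply_eq_zero hf]
    _ ≤ _ := (T ∘L (1 - restrictCLM E p s)).le_opNorm f

theorem antitone_norm_comp_one_sub_restrictCLM (hp : p ≠ ⊤) (T : lp E p →L[ℝ] F) :
    Antitone fun s : Finset α => ‖T ∘L (1 - restrictCLM E p s)‖ := by
  intro s t hst
  refine ContinuousLinearMap.opNorm_le_bound _ (norm_nonneg _) fun f => ?_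
  calc ‖T (f - restrictCLM E p t f)‖
      ≤ ‖T ∘L (1 - restrictCLM E p s)‖ * ‖f - restrictCLM E p t f‖ :=
        norm_apply_le_norm_comp_one_sub_restrictCLM T fun i hi =>
          sub_restrictCLM_apply_apply_of_mem (hst hi) f
    _ ≤ ‖T ∘L (1 - restrictCLM E p s)‖ * ‖f‖ := by
        gcongr; exact norm_sub_restrictCLM_apply_le hp t f

theorem exists_finitely_supported_lt_norm_apply (hp : p ≠ ⊤) (T : lp E p →L[ℝ] F)
    {s : Finset α} {c : ℝ} (hc : c < ‖T ∘L (1 - restrictCLM E p s)‖) :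
    ∃ t, s ⊆ t ∧ ∃ u : lp E p, ‖u‖ ≤ 1 ∧ (∀ i ∈ s, u i = 0) ∧ (∀ i ∉ t, u i = 0) ∧
      c < ‖T u‖ := by
  obtain ⟨f, hf, hcf⟩ := (T ∘L (1 - restrictCLM E p s)).exists_lt_apply_of_lt_opNorm hc
  set w := f - restrictCLM E p s f
  have hlim : Tendsto (fun t => ‖T (restrictCLM E p t w)‖) atTop (𝓝 ‖T w‖) :=
    ((T.continuous.tendsto w).comp (tendsto_restrictCLM_apply hp w)).norm
  have hcw : c < ‖T w‖ := hcf.trans_eq (by simp [w])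
  obtain ⟨t, hst, ht⟩ := ((eventually_ge_atTop s).and (hlim.eventually (lt_mem_nhds hcw))).exists
  refine ⟨t, hst, restrictCLM E p t w, ?_, fun i hi => ?_,
    fun i hi => restrictCLM_apply_apply_of_notMem hi w, ht⟩
  · exact (norm_restrictCLM_apply_le hp t w).trans
      ((norm_sub_restrictCLM_apply_le hp s f).trans hf.le)
  · rw [restrictCLM_apply_apply_of_mem (hst hi), sub_restrictCLM_apply_apply_of_mem hi]

end Normed

variable {H : Type*} [NormedAddCommGroup H] [InnerProductSpace ℝ H]

theorem le_two_rpow_div_sqrt_two_mul_norm_comp_one_sub_restrictCLM (hp : 2 < p.toReal)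
    (T : lp E p →L[ℝ] H) {c : ℝ} (hc : ∀ t, c < ‖T ∘L (1 - restrictCLM E p t)‖)
    (s : Finset α) :
    c ≤ 2 ^ p.toReal⁻¹ / √2 * ‖T ∘L (1 - restrictCLM E p s)‖ := by
  have hp₀ : 0 < p.toReal := by linarith
  have hp' : p ≠ ⊤ := by rintro rfl; norm_num at hp
  set a := ‖T ∘L (1 - restrictCLM E p s)‖
  obtain ⟨t, hst, u, hu, hus, hut, hcu⟩ := exists_finitely_supported_lt_norm_apply hp' T (hc s)
  obtain ⟨f, hf, hcv⟩ := (T ∘L (1 - restrictCLM E p t)).exists_lt_apply_of_lt_opNorm (hc t)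
  set v := f - restrictCLM E p t f
  have hv : ‖v‖ ≤ 1 := (norm_sub_restrictCLM_apply_le hp' t f).trans hf.le
  have hvt : ∀ i ∈ t, v i = 0 := fun i hi => sub_restrictCLM_apply_apply_of_mem hi f
  have hdisj : ∀ i, u i = 0 ∨ v i = 0 := fun i => by
    by_cases hi : i ∈ t
    · exact .inr (hvt i hi)
    · exact .inl (hut i hi)
  have hplus : ‖T u + T v‖ ≤ a * 2 ^ p.toReal⁻¹ := by
    rw [← map_add]
    refine (norm_apply_le_norm_comp_one_sub_restrictCLM T (s := s) fun i hi => ?_).trans ?_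
    · simp [hus i hi, hvt i (hst hi)]
    · gcongr; exact norm_add_le_of_disjoint hp₀ hdisj hu hv
  have hminus : ‖T u - T v‖ ≤ a * 2 ^ p.toReal⁻¹ := by
    rw [← map_sub, sub_eq_add_neg]
    refine (norm_apply_le_norm_comp_one_sub_restrictCLM T (s := s) fun i hi => ?_).trans ?_
    · simp [hus i hi, hvt i (hst hi)]
    · gcongr
      exact norm_add_le_of_disjoint hp₀ (fun i => (hdisj i).imp_right (by simp [·]))
        hu ((norm_neg v).le.trans hv)
  have hcv' : c < ‖T v‖ := hcv.trans_eq (by simp [v])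
  rcases le_or_gt c 0 with hc₀ | hc₀
  · exact hc₀.trans (by positivity)
  have hsq : 2 * c ^ 2 ≤ (2 ^ p.toReal⁻¹ * a) ^ 2 := by
    have hpar := parallelogram_law_with_norm ℝ (T u) (T v)
    have := pow_lt_pow_left₀ hcu hc₀.le two_ne_zero
    have := pow_lt_pow_left₀ hcv' hc₀.le two_ne_zero
    have := pow_le_pow_left₀ (norm_nonneg _) hplus 2
    have := pow_le_pow_left₀ (norm_nonneg _) hminus 2
    linarith
  have hr : (2 ^ p.toReal⁻¹ / √2 * a) ^ 2 = (2 ^ p.toReal⁻¹ * a) ^ 2 / 2 := by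
    rw [div_mul_eq_mul_div, div_pow, Real.sq_sqrt zero_le_two]
  refine (pow_le_pow_iff_left₀ hc₀.le (by positivity) two_ne_zero).1 ?_
  rw [hr]
  linarith

theorem tendsto_norm_comp_one_sub_restrictCLM (hp : 2 < p.toReal) (T : lp E p →L[ℝ] H) :
    Tendsto (fun s : Finset α => ‖T ∘L (1 - restrictCLM E p s)‖) atTop (𝓝 0) := by
  have hp' : p ≠ ⊤ := by rintro rfl; norm_num at hp
  have hbdd : BddBelow (Set.range fun s : Finset α => ‖T ∘L (1 - restrictCLM E p s)‖) :=
    ⟨0, by rintro _ ⟨s, rfl⟩; positivity⟩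
  have hlim := tendsto_atTop_ciInf (antitone_norm_comp_one_sub_restrictCLM hp' T) hbdd
  set a := ⨅ s : Finset α, ‖T ∘L (1 - restrictCLM E p s)‖
  have ha₀ : 0 ≤ a := le_ciInf fun s => norm_nonneg _
  have hr : 2 ^ p.toReal⁻¹ / √2 < 1 := by
    rw [div_lt_one (by positivity), Real.sqrt_eq_rpow]
    refine Real.rpow_lt_rpow_of_exponent_lt one_lt_two ?_
    rw [inv_lt_iff_one_lt_mul₀ (by linarith)]
    linarith
  have ha : a ≤ 2 ^ p.toReal⁻¹ / √2 * a := le_of_forall_lt_imp_le_of_dense fun c hc =>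
    ge_of_tendsto (hlim.const_mul _) <| .of_forall <|
      le_two_rpow_div_sqrt_two_mul_norm_comp_one_sub_restrictCLM hp T fun t =>
        hc.trans_le (ciInf_le hbdd t)
  rwa [show a = 0 by nlinarith] at hlim

end OperatorNormOnTails

/-- For `2 < p < ∞`, every bounded linear operator from `ℓ_p` (countably infinite index set)
into a Hilbert space is compact. -/
theorem stmt0 (p : ℝ≥0∞) [Fact (1 ≤ p)] (hp : 2 < p) (hp' : p < ⊤)
    (H : Type*) [NormedAddCommGroup H] [InnerProductSpace ℝ H] [CompleteSpace H]
    (T : lp (fun _ : ℕ => ℝ) p →L[ℝ] H) :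
    IsCompactOperator T := by
  have hp₂ : 2 < p.toReal := by
    simpa using ENNReal.toReal_strict_mono hp'.ne hp
  refine isCompactOperator_of_tendsto (l := atTop)
    (F := fun s => T ∘L lp.restrictCLM _ p s) ?_
    (.of_forall fun s => (lp.isCompactOperator_restrictCLM s).clm_comp T)
  rw [tendsto_iff_norm_sub_tendsto_zero]
  refine (tendsto_norm_comp_one_sub_restrictCLM hp₂ T).congr fun s => ?_
  rw [ContinuousLinearMap.comp_sub, ContinuousLinearMap.one_def, ContinuousLinearMap.comp_id,
    norm_sub_rev]
end

section
/- For 2 < p < ∞ and an uncountable index set Γ, there is no injective bounded linear operator from ℓ_p(Γ) into a Hilbert space. -/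
open scoped ENNReal

open Finset in
lemma sign_sum_sq {Γ : Type*} [DecidableEq Γ] {H : Type*} [NormedAddCommGroup H] [InnerProductSpace ℝ H]
    (s : Finset Γ) (v : Γ → H) :
    ∑ t ∈ s.powerset, ‖∑ γ ∈ s, (if γ ∈ t then (1:ℝ) else -1) • v γ‖ ^ 2
      = 2 ^ s.card * ∑ γ ∈ s, ‖v γ‖ ^ 2 := by
  induction s using Finset.induction_on with
  | empty => simp
  | @insert a s ha ih =>
    have hinj : ∀ t1 ∈ s.powerset, ∀ t2 ∈ s.powerset, insert a t1 = insert a t2 → t1 = t2 := by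
      intro t1 h1 t2 h2 h
      have h1' : a ∉ t1 := fun h' => ha ((Finset.mem_powerset.1 h1) h')
      have h2' : a ∉ t2 := fun h' => ha ((Finset.mem_powerset.1 h2) h')
      rw [← Finset.erase_insert h1', ← Finset.erase_insert h2', h]
    have hdisj : Disjoint s.powerset (s.powerset.image (insert a)) := by
      rw [Finset.disjoint_left]
      intro t ht ht'
      obtain ⟨u, hu, rfl⟩ := Finset.mem_image.1 ht'
      exact ha ((Finset.mem_powerset.1 ht) (Finset.mem_insert_self a u))
    rw [Finset.powerset_insert, Finset.sum_union hdisj, Finset.sum_image hinj]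
    have key : ∀ t ∈ s.powerset,
        ‖∑ γ ∈ insert a s, (if γ ∈ t then (1:ℝ) else -1) • v γ‖ ^ 2
          + ‖∑ γ ∈ insert a s, (if γ ∈ insert a t then (1:ℝ) else -1) • v γ‖ ^ 2
        = 2 * (‖∑ γ ∈ s, (if γ ∈ t then (1:ℝ) else -1) • v γ‖ ^ 2 + ‖v a‖ ^ 2) := by
      intro t ht
      have hat : a ∉ t := fun h => ha ((Finset.mem_powerset.1 ht) h)
      have hw : ∑ γ ∈ s, (if γ ∈ insert a t then (1:ℝ) else -1) • v γ
          = ∑ γ ∈ s, (if γ ∈ t then (1:ℝ) else -1) • v γ := by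
        refine Finset.sum_congr rfl fun γ hγ => ?_
        have hne : γ ≠ a := fun h => ha (h ▸ hγ)
        simp [Finset.mem_insert, hne]
      rw [Finset.sum_insert ha, Finset.sum_insert ha, if_neg hat,
        if_pos (Finset.mem_insert_self a t), hw]
      set w := ∑ γ ∈ s, (if γ ∈ t then (1:ℝ) else -1) • v γ with hwdef
      have h1 : (-1 : ℝ) • v a + w = w - v a := by
        rw [neg_one_smul]; abel
      rw [h1, one_smul, norm_sub_sq_real, norm_add_sq_real,
        real_inner_comm (v a) w]
      ring
    rw [← Finset.sum_add_distrib, Finset.sum_congr rfl key]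
    simp only [mul_add, Finset.sum_add_distrib, ← Finset.mul_sum, ih, Finset.sum_const,
      Finset.card_powerset, Finset.sum_insert ha, Finset.card_insert_of_notMem ha,
      nsmul_eq_mul]
    push_cast
    ring

/-- For `2 < p < ∞` and an uncountable index set `Γ`, there is no injective bounded linear
operator from `ℓ_p(Γ)` into a Hilbert space. -/
theorem stmt1 (p : ℝ≥0∞) [Fact (1 ≤ p)] (hp : 2 < p) (hp' : p < ⊤)
    (Γ : Type*) [Uncountable Γ]
    (H : Type*) [NormedAddCommGroup H] [InnerProductSpace ℝ H] [CompleteSpace H] :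
    ¬ ∃ T : lp (fun _ : Γ => ℝ) p →L[ℝ] H, Function.Injective T := by
  classical
  rintro ⟨T, hT⟩
  set pR := p.toReal with hpR
  have hp2 : 2 < pR := by
    have := (ENNReal.toReal_lt_toReal (by norm_num) hp'.ne).2 hp
    simpa using this
  have hpR0 : 0 < pR := by linarith
  set e : Γ → lp (fun _ : Γ => ℝ) p := fun γ => lp.single p γ (1:ℝ) with he
  -- norm computation for signed sums of basis vectors
  have hxnorm : ∀ (s : Finset Γ) (t : Finset Γ),
      ‖∑ γ ∈ s, (if γ ∈ t then (1:ℝ) else -1) • e γ‖ ^ 2 = (s.card : ℝ) ^ (2 / pR) := by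
    intro s t
    have h1 : ∑ γ ∈ s, (if γ ∈ t then (1:ℝ) else -1) • e γ
        = ∑ γ ∈ s, lp.single p γ (if γ ∈ t then (1:ℝ) else -1) := by
      refine Finset.sum_congr rfl fun γ _ => ?_
      rw [he]
      rw [← lp.single_smul, smul_eq_mul, mul_one]
    rw [h1]
    have h2 := lp.norm_sum_single (p := p) hpR0 (fun γ => if γ ∈ t then (1:ℝ) else -1) s
    have h3 : ∑ γ ∈ s, ‖if γ ∈ t then (1:ℝ) else -1‖ ^ pR = (s.card : ℝ) := by
      have hone : ∀ γ ∈ s, ‖if γ ∈ t then (1:ℝ) else -1‖ ^ pR = 1 := by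
        intro γ _; split <;> simp
      rw [Finset.sum_congr rfl hone]; simp
    rw [h3] at h2
    set x := ∑ γ ∈ s, lp.single (E := fun _ : Γ => ℝ) p γ (if γ ∈ t then (1:ℝ) else -1)
    have hx0 : (0:ℝ) ≤ ‖x‖ := norm_nonneg _
    calc ‖x‖ ^ 2 = ‖x‖ ^ (2:ℝ) := by rw [Real.rpow_two]
      _ = ‖x‖ ^ (pR * (2 / pR)) := by rw [show pR * (2 / pR) = (2:ℝ) from by field_simp]
      _ = (‖x‖ ^ pR) ^ (2 / pR) := Real.rpow_mul hx0 _ _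
      _ = (s.card : ℝ) ^ (2 / pR) := by rw [h2]
  -- main bound
  have main : ∀ s : Finset Γ, ∑ γ ∈ s, ‖T (e γ)‖ ^ 2 ≤ ‖T‖ ^ 2 * (s.card : ℝ) ^ (2 / pR) := by
    intro s
    have h1 : (2:ℝ) ^ s.card * ∑ γ ∈ s, ‖T (e γ)‖ ^ 2
        = ∑ t ∈ s.powerset, ‖∑ γ ∈ s, (if γ ∈ t then (1:ℝ) else -1) • T (e γ)‖ ^ 2 :=
      (sign_sum_sq s fun γ => T (e γ)).symm
    have h2 : ∀ t ∈ s.powerset,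
        ‖∑ γ ∈ s, (if γ ∈ t then (1:ℝ) else -1) • T (e γ)‖ ^ 2
          ≤ ‖T‖ ^ 2 * (s.card : ℝ) ^ (2 / pR) := by
      intro t _
      have hTx : ∑ γ ∈ s, (if γ ∈ t then (1:ℝ) else -1) • T (e γ)
          = T (∑ γ ∈ s, (if γ ∈ t then (1:ℝ) else -1) • e γ) := by
        rw [map_sum]
        exact Finset.sum_congr rfl fun γ _ => (T.map_smul _ _).symm
      rw [hTx]
      calc ‖T (∑ γ ∈ s, (if γ ∈ t then (1:ℝ) else -1) • e γ)‖ ^ 2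
          ≤ (‖T‖ * ‖∑ γ ∈ s, (if γ ∈ t then (1:ℝ) else -1) • e γ‖) ^ 2 := by
            apply pow_le_pow_left₀ (norm_nonneg _) (T.le_opNorm _)
        _ = ‖T‖ ^ 2 * (s.card : ℝ) ^ (2 / pR) := by rw [mul_pow, hxnorm s t]
    have h4 : (2:ℝ) ^ s.card * ∑ γ ∈ s, ‖T (e γ)‖ ^ 2
        ≤ (2:ℝ) ^ s.card * (‖T‖ ^ 2 * (s.card : ℝ) ^ (2 / pR)) := by
      calc (2:ℝ) ^ s.card * ∑ γ ∈ s, ‖T (e γ)‖ ^ 2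
          = ∑ t ∈ s.powerset, ‖∑ γ ∈ s, (if γ ∈ t then (1:ℝ) else -1) • T (e γ)‖ ^ 2 := h1
        _ ≤ ∑ t ∈ s.powerset, ‖T‖ ^ 2 * (s.card : ℝ) ^ (2 / pR) := Finset.sum_le_sum h2
        _ = (2:ℝ) ^ s.card * (‖T‖ ^ 2 * (s.card : ℝ) ^ (2 / pR)) := by
            rw [Finset.sum_const, Finset.card_powerset, nsmul_eq_mul]; push_cast; ring
    exact le_of_mul_le_mul_left h4 (by positivity)
  -- each level set is finite
  have hfin : ∀ ε : ℝ, 0 < ε → {γ : Γ | ε ≤ ‖T (e γ)‖}.Finite := by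
    intro ε hε
    by_contra hA
    have hA' : {γ : Γ | ε ≤ ‖T (e γ)‖}.Infinite := hA
    set c := 1 - 2 / pR with hc
    have hc0 : 0 < c := by
      rw [hc]; rw [sub_pos, div_lt_one hpR0]; linarith
    set B := ‖T‖ ^ 2 / ε ^ 2 with hB
    have hB0 : 0 ≤ B := by positivity
    -- choose m with m^c > B ; use m := ⌈B^(1/c)⌉₊ + 1
    set m := ⌈B ^ (1 / c)⌉₊ + 1 with hm
    have hmB : B ^ (1 / c) < (m : ℝ) := by
      calc B ^ (1 / c) ≤ (⌈B ^ (1 / c)⌉₊ : ℝ) := Nat.le_ceil _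
        _ < (m : ℝ) := by rw [hm]; push_cast; linarith
    obtain ⟨s, hs, hcard⟩ := hA'.exists_subset_card_eq m
    have hsum : (m : ℝ) * ε ^ 2 ≤ ∑ γ ∈ s, ‖T (e γ)‖ ^ 2 := by
      calc (m : ℝ) * ε ^ 2 = ∑ _γ ∈ s, ε ^ 2 := by
            rw [Finset.sum_const, hcard, nsmul_eq_mul]
        _ ≤ ∑ γ ∈ s, ‖T (e γ)‖ ^ 2 := by
            refine Finset.sum_le_sum fun γ hγ => ?_
            have := hs hγ
            exact pow_le_pow_left₀ hε.le this 2
    have hmain := main s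
    rw [hcard] at hmain
    -- m ε² ≤ ‖T‖² m^{2/pR}
    have key : (m : ℝ) * ε ^ 2 ≤ ‖T‖ ^ 2 * (m : ℝ) ^ (2 / pR) := hsum.trans hmain
    have hm0 : (0:ℝ) < m := by positivity
    have hm1 : (m : ℝ) = (m : ℝ) ^ c * (m : ℝ) ^ (2 / pR) := by
      rw [← Real.rpow_add hm0, hc]
      norm_num
    have hpow : (0:ℝ) < (m : ℝ) ^ (2 / pR) := Real.rpow_pos_of_pos hm0 _
    have key2 : (m : ℝ) ^ c * ε ^ 2 ≤ ‖T‖ ^ 2 := by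
      have := key
      rw [hm1] at this
      nlinarith [hpow]
    have hgt : B < (m : ℝ) ^ c := by
      calc B = (B ^ (1 / c)) ^ c := by
            rw [← Real.rpow_mul hB0, one_div_mul_cancel hc0.ne', Real.rpow_one]
        _ < (m : ℝ) ^ c := Real.rpow_lt_rpow (Real.rpow_nonneg hB0 _) hmB hc0
    have : ‖T‖ ^ 2 < (m : ℝ) ^ c * ε ^ 2 := by
      rw [hB] at hgt
      rw [div_lt_iff₀ (by positivity)] at hgt
      linarith
    linarith
  -- countability
  have hcount : {γ : Γ | T (e γ) ≠ 0}.Countable := by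
    have hU : {γ : Γ | T (e γ) ≠ 0} ⊆ ⋃ n : ℕ, {γ : Γ | 1 / (n + 1 : ℝ) ≤ ‖T (e γ)‖} := by
      intro γ hγ
      have h0 : 0 < ‖T (e γ)‖ := norm_pos_iff.2 hγ
      obtain ⟨n, hn⟩ := exists_nat_one_div_lt h0
      exact Set.mem_iUnion.2 ⟨n, hn.le⟩
    refine Set.Countable.mono hU (Set.countable_iUnion fun n => ?_)
    exact (hfin _ (by positivity)).countable
  have : ∃ γ : Γ, T (e γ) = 0 := by
    by_contra h
    push_neg at h
    have : {γ : Γ | T (e γ) ≠ 0} = Set.univ := Set.eq_univ_of_forall h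
    rw [this] at hcount
    exact not_countable (α := Γ) (Set.countable_univ_iff.1 hcount)
  obtain ⟨γ, hγ⟩ := this
  have : e γ = 0 := hT (by rw [hγ, map_zero])
  have h1 : e γ γ = 1 := lp.single_apply_self p γ 1
  rw [this] at h1
  simp at h1
end

section
/- Let 1 ≤ p < 2, let (x_α)_{α ∈ A} be a family of unit vectors in L_p(μ), and suppose there exist pairwise disjoint measurable sets (Ω_α)_{α ∈ A} and ε > 0 such that ‖x_α · 1_{Ω_α}‖_p > ε for all α, and the family (x_α) is C-unconditional. Then (x_α) is equivalent to the unit vector basis of ℓ_p(A): there are constants c, C' > 0 such that for all finitely supported scalar families (a_α), c (∑|a_α|^p)^{1/p} ≤ ‖∑ a_α x_α‖_p ≤ C' (∑|a_α|^p)^{1/p}. -/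
/-!
Average over all sign patterns. By unconditionality every signed sum `∑ ±a_α x_α` has norm
comparable to `‖∑ a_α x_α‖`, so it suffices to estimate the average of `‖∑ ±a_α x_α‖_p^p`, which
is the integral of the pointwise average of `|∑ ±a_α x_α(ω)|^p`. For `1 ≤ p ≤ 2` this scalar average
lies between each `|a_α x_α(ω)|^p` (Jensen: `a_α x_α(ω)` is the sign-weighted average of the signed
sums) and `∑ |a_α x_α(ω)|^p` (power means and `ℓ_p ⊆ ℓ_2`). Integrating the upper bound gives the
upper estimate; integrating the lower bound over the disjoint big pieces `Ω_α` gives the lower one.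
-/

open scoped ENNReal
open MeasureTheory Finset

lemma Real.rpow_sum_le_sum_rpow {α : Type*} (t : Finset α) {u : α → ℝ} (hu : ∀ a ∈ t, 0 ≤ u a)
    {r : ℝ} (hr0 : 0 < r) (hr1 : r ≤ 1) : (∑ a ∈ t, u a) ^ r ≤ ∑ a ∈ t, u a ^ r := by
  classical
  induction t using Finset.induction_on with
  | empty => simp [Real.zero_rpow hr0.ne']
  | insert a t ha ih =>
    rw [sum_insert ha, sum_insert ha]
    have hu' : ∀ b ∈ t, 0 ≤ u b := fun b hb => hu b (mem_insert_of_mem hb)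
    calc (u a + ∑ b ∈ t, u b) ^ r ≤ u a ^ r + (∑ b ∈ t, u b) ^ r :=
          Real.rpow_add_le_add_rpow (hu a (mem_insert_self a t)) (sum_nonneg hu') hr0.le hr1
      _ ≤ u a ^ r + ∑ b ∈ t, u b ^ r := by gcongr; exact ih hu'

lemma Real.mul_rpow_one_div_rpow {K Y q : ℝ} (hK : 0 ≤ K) (hY : 0 ≤ Y) (hq : q ≠ 0) :
    (K * Y ^ (1 / q)) ^ q = K ^ q * Y := by
  rw [Real.mul_rpow hK (by positivity), ← Real.rpow_mul hY, one_div_mul_cancel hq, Real.rpow_one]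

lemma Real.le_mul_rpow_one_div_of_rpow_le {X K Y q : ℝ} (hX : 0 ≤ X) (hK : 0 ≤ K) (hY : 0 ≤ Y)
    (hq : 0 < q) (h : X ^ q ≤ K ^ q * Y) : X ≤ K * Y ^ (1 / q) := by
  rwa [← Real.rpow_le_rpow_iff hX (by positivity) hq, Real.mul_rpow_one_div_rpow hK hY hq.ne']

lemma Real.div_mul_rpow_one_div_le_of_rpow_mul_le {ε K X Y q : ℝ} (hε : 0 ≤ ε) (hK : 0 < K)
    (hX : 0 ≤ X) (hY : 0 ≤ Y) (hq : 0 < q) (h : ε ^ q * Y ≤ K ^ q * X ^ q) :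
    ε / K * Y ^ (1 / q) ≤ X := by
  rw [div_mul_eq_mul_div, div_le_iff₀ hK,
    ← Real.rpow_le_rpow_iff (by positivity) (by positivity) hq,
    Real.mul_rpow_one_div_rpow hε hY hq.ne', Real.mul_rpow hX hK.le]
  exact h.trans_eq (mul_comm _ _)

section SignAverage

lemma sum_powerset_inv_two_pow {ι : Type*} (s : Finset ι) :
    ∑ _T ∈ s.powerset, ((2 : ℝ) ^ #s)⁻¹ = 1 := by
  simp

variable {ι : Type*} [DecidableEq ι]

/-- A subset `T` encodes the signs `+1` on `T` and `-1` off `T`, so that sums over `s.powerset`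
run over all sign patterns on `s`. -/
def signOf (T : Finset ι) (i : ι) : ℝ := if i ∈ T then 1 else -1

def signSum {M : Type*} [AddCommGroup M] [Module ℝ M] (s T : Finset ι) (y : ι → M) : M :=
  ∑ i ∈ s, signOf T i • y i

lemma signOf_mul_self (T : Finset ι) (i : ι) : signOf T i * signOf T i = 1 := by
  unfold signOf; split <;> norm_num

lemma signOf_eq_one_or_eq_neg_one (T : Finset ι) (i : ι) : signOf T i = 1 ∨ signOf T i = -1 := by
  unfold signOf; split <;> simp

lemma abs_signOf (T : Finset ι) (i : ι) : |signOf T i| = 1 := by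
  rcases signOf_eq_one_or_eq_neg_one T i with h | h <;> simp [h]

lemma sum_powerset_signOf_mul_signOf (s : Finset ι) {i : ι} (hi : i ∈ s) (j : ι) :
    ∑ T ∈ s.powerset, signOf T i * signOf T j = if i = j then 2 ^ #s else 0 := by
  split_ifs with hij
  · subst hij
    simp [signOf_mul_self]
  obtain ⟨t, hit, rfl⟩ : ∃ t, i ∉ t ∧ s = insert i t :=
    ⟨s.erase i, notMem_erase _ _, (insert_erase hi).symm⟩
  rw [sum_powerset_insert hit, ← sum_add_distrib]
  refine sum_eq_zero fun T hT => ?_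
  have hiT : i ∉ T := fun h => hit (mem_powerset.1 hT h)
  have hji : j ∈ insert i T ↔ j ∈ T := by simp [Ne.symm hij]
  simp only [signOf, hiT, hji, mem_insert_self, if_true, if_false]
  split_ifs <;> norm_num

lemma sum_powerset_signOf_mul_signSum (s : Finset ι) {i : ι} (hi : i ∈ s) (c : ι → ℝ) :
    ∑ T ∈ s.powerset, signOf T i * signSum s T c = 2 ^ #s * c i := by
  simp_rw [signSum, smul_eq_mul, mul_sum, ← mul_assoc]
  rw [sum_comm]
  simp_rw [← sum_mul, sum_powerset_signOf_mul_signOf s hi, ite_mul, zero_mul, sum_ite_eq,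
    if_pos hi]

lemma sum_powerset_signSum_sq (s : Finset ι) (c : ι → ℝ) :
    ∑ T ∈ s.powerset, signSum s T c ^ 2 = 2 ^ #s * ∑ i ∈ s, c i ^ 2 := by
  calc ∑ T ∈ s.powerset, signSum s T c ^ 2
      = ∑ i ∈ s, c i * ∑ T ∈ s.powerset, signOf T i * signSum s T c := by
        simp_rw [mul_sum, sq]
        rw [sum_comm]
        refine sum_congr rfl fun T _ => ?_
        rw [signSum, sum_mul]
        exact sum_congr rfl fun i _ => by simp only [smul_eq_mul]; ring
    _ = 2 ^ #s * ∑ i ∈ s, c i ^ 2 := by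
        rw [mul_sum]
        exact sum_congr rfl fun i hi => by
          rw [sum_powerset_signOf_mul_signSum s hi]; ring

/-- Khintchine's inequality with constant one, for exponents `q ≤ 2`. -/
lemma sum_powerset_abs_signSum_rpow_le (s : Finset ι) (c : ι → ℝ) {q : ℝ} (hq0 : 0 < q)
    (hq2 : q ≤ 2) :
    ∑ T ∈ s.powerset, |signSum s T c| ^ q ≤ 2 ^ #s * ∑ i ∈ s, |c i| ^ q := by
  have h2 : (0 : ℝ) < 2 ^ #s := by positivity
  have hpow : ∀ t : ℝ, (|t| ^ q) ^ (2 / q) = t ^ 2 := fun t => by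
    rw [← Real.rpow_mul (abs_nonneg t), mul_div_cancel₀ _ hq0.ne', Real.rpow_two, sq_abs]
  have hmean := Real.arith_mean_le_rpow_mean s.powerset (fun _ => ((2 : ℝ) ^ #s)⁻¹)
    (fun T => |signSum s T c| ^ q) (fun _ _ => by positivity) (sum_powerset_inv_two_pow s)
    (fun _ _ => by positivity) ((one_le_div hq0).2 hq2)
  simp_rw [hpow, ← mul_sum, sum_powerset_signSum_sq, inv_mul_cancel_left₀ h2.ne',
    one_div_div] at hmean
  have hsub : (∑ i ∈ s, c i ^ 2) ^ (q / 2) ≤ ∑ i ∈ s, |c i| ^ q := by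
    refine (Real.rpow_sum_le_sum_rpow s (fun i _ => sq_nonneg (c i)) (by positivity)
      (by linarith)).trans_eq (sum_congr rfl fun i _ => ?_)
    rw [← sq_abs, ← Real.rpow_natCast, ← Real.rpow_mul (abs_nonneg _)]
    norm_num [mul_div_cancel₀]
  exact (inv_mul_le_iff₀ h2).1 (hmean.trans hsub)

lemma two_pow_mul_abs_rpow_le_sum_powerset (s : Finset ι) {i : ι} (hi : i ∈ s) (c : ι → ℝ)
    {q : ℝ} (hq : 1 ≤ q) :
    2 ^ #s * |c i| ^ q ≤ ∑ T ∈ s.powerset, |signSum s T c| ^ q := by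
  have h2 : (0 : ℝ) < 2 ^ #s := by positivity
  have hci : |c i| ≤ ∑ T ∈ s.powerset, ((2 : ℝ) ^ #s)⁻¹ * |signSum s T c| := by
    rw [← mul_sum, le_inv_mul_iff₀ h2, ← abs_of_pos h2, ← abs_mul,
      ← sum_powerset_signOf_mul_signSum s hi]
    refine (abs_sum_le_sum_abs _ _).trans_eq (sum_congr rfl fun T _ => ?_)
    rw [abs_mul, abs_signOf, one_mul]
  have hjensen := Real.rpow_arith_mean_le_arith_mean_rpow s.powerset (fun _ => ((2 : ℝ) ^ #s)⁻¹)
    (fun T => |signSum s T c|) (fun _ _ => by positivity) (sum_powerset_inv_two_pow s)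
    (fun _ _ => abs_nonneg _) hq
  rw [← le_inv_mul_iff₀ h2, mul_sum]
  exact (Real.rpow_le_rpow (abs_nonneg _) hci (by linarith)).trans hjensen

end SignAverage

lemma Finset.sum_indicator_apply_le_of_pairwiseDisjoint {ι Ω : Type*} {s : Finset ι}
    {S : ι → Set Ω} (hdisj : (s : Set ι).PairwiseDisjoint S) {g : ι → Ω → ℝ} {G : ℝ} {ω : Ω}
    (hg : ∀ i ∈ s, ω ∈ S i → g i ω ≤ G) (hG : 0 ≤ G) :
    ∑ i ∈ s, (S i).indicator (g i) ω ≤ G := by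
  by_cases h : ∃ i ∈ s, ω ∈ S i
  · obtain ⟨i, hi, hωi⟩ := h
    rw [sum_eq_single_of_mem i hi fun j hj hji => Set.indicator_of_notMem
      (fun hωj => Set.disjoint_left.1 (hdisj hj hi hji) hωj hωi) _, Set.indicator_of_mem hωi]
    exact hg i hi hωi
  · push Not at h
    rw [sum_eq_zero fun i hi => Set.indicator_of_notMem (h i hi) _]
    exact hG

section Lp

variable {Ω E : Type*} [MeasurableSpace Ω] {μ : Measure Ω} {p : ℝ≥0∞} [NormedAddCommGroup E]

lemma MeasureTheory.Lp.coeFn_sum_smul [NormedSpace ℝ E] {ι : Type*} (s : Finset ι) (w : ι → ℝ)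
    (y : ι → Lp E p μ) : ⇑(∑ i ∈ s, w i • y i) =ᵐ[μ] fun ω => ∑ i ∈ s, w i • y i ω := by
  classical
  induction s using Finset.induction_on with
  | empty => simp only [sum_empty]; exact Lp.coeFn_zero E p μ
  | insert a s ha ih =>
    rw [sum_insert ha]
    filter_upwards [Lp.coeFn_add (w a • y a) (∑ i ∈ s, w i • y i), Lp.coeFn_smul (w a) (y a), ih]
      with ω h1 h2 h3
    rw [h1, Pi.add_apply, h2, h3, Pi.smul_apply, sum_insert ha]

lemma MeasureTheory.Lp.norm_rpow_toReal_eq_integral (hp0 : p ≠ 0) (hp : p ≠ ∞) (f : Lp E p μ) :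
    ‖f‖ ^ p.toReal = ∫ ω, ‖f ω‖ ^ p.toReal ∂μ := by
  rw [Lp.norm_def, (Lp.memLp f).eLpNorm_eq_integral_rpow_norm hp0 hp,
    ENNReal.toReal_ofReal (by positivity), Real.rpow_inv_rpow (by positivity)
      (ENNReal.toReal_pos hp0 hp).ne']

lemma MeasureTheory.Lp.setIntegral_norm_smul_rpow [NormedSpace ℝ E] (c : ℝ) (f : Lp E p μ)
    (S : Set Ω) (r : ℝ) :
    ∫ ω in S, ‖(c • f) ω‖ ^ r ∂μ = |c| ^ r * ∫ ω in S, ‖f ω‖ ^ r ∂μ := by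
  rw [← integral_const_mul]
  refine integral_congr_ae (ae_restrict_of_ae ?_)
  filter_upwards [Lp.coeFn_smul c f] with ω h
  rw [h, Pi.smul_apply, norm_smul, Real.norm_eq_abs, Real.mul_rpow (abs_nonneg c) (norm_nonneg _)]

lemma MeasureTheory.Lp.rpow_lt_setIntegral_norm_rpow (hp0 : p ≠ 0) (hp : p ≠ ∞) (f : Lp E p μ)
    {S : Set Ω} (hS : MeasurableSet S) {ε : ℝ} (hε : 0 ≤ ε)
    (h : ENNReal.ofReal ε < eLpNorm (S.indicator f) p μ) :
    ε ^ p.toReal < ∫ ω in S, ‖f ω‖ ^ p.toReal ∂μ := by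
  have hq : 0 < p.toReal := ENNReal.toReal_pos hp0 hp
  rw [eLpNorm_indicator_eq_eLpNorm_restrict hS,
    ((Lp.memLp f).restrict S).eLpNorm_eq_integral_rpow_norm hp0 hp,
    ENNReal.ofReal_lt_ofReal_iff_of_nonneg hε] at h
  have hI : 0 ≤ ∫ ω in S, ‖f ω‖ ^ p.toReal ∂μ := setIntegral_nonneg hS fun _ _ => by positivity
  simpa [Real.rpow_inv_rpow hI hq.ne'] using Real.rpow_lt_rpow hε h hq

variable {ι : Type*} [DecidableEq ι]

lemma MeasureTheory.Lp.norm_signSum_rpow_ae_eq (s T : Finset ι) (y : ι → Lp ℝ p μ) (r : ℝ) :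
    (fun ω => ‖signSum s T y ω‖ ^ r) =ᵐ[μ] fun ω => |signSum s T (y · ω)| ^ r := by
  filter_upwards [Lp.coeFn_sum_smul s (signOf T) y] with ω h
  rw [signSum, h, Real.norm_eq_abs]
  rfl

lemma MeasureTheory.Lp.integrable_abs_signSum_rpow (hp0 : p ≠ 0) (hp : p ≠ ∞) (s T : Finset ι)
    (y : ι → Lp ℝ p μ) : Integrable (fun ω => |signSum s T (y · ω)| ^ p.toReal) μ :=
  ((Lp.memLp (signSum s T y)).integrable_norm_rpow hp0 hp).congr (norm_signSum_rpow_ae_eq s T y _)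

lemma MeasureTheory.Lp.sum_powerset_norm_signSum_rpow_eq_integral (hp0 : p ≠ 0) (hp : p ≠ ∞)
    (s : Finset ι) (y : ι → Lp ℝ p μ) :
    ∑ T ∈ s.powerset, ‖signSum s T y‖ ^ p.toReal
      = ∫ ω, ∑ T ∈ s.powerset, |signSum s T (y · ω)| ^ p.toReal ∂μ := by
  rw [integral_finsetSum _ fun T _ => integrable_abs_signSum_rpow hp0 hp s T y]
  exact sum_congr rfl fun T _ => by
    rw [Lp.norm_rpow_toReal_eq_integral hp0 hp, integral_congr_ae (norm_signSum_rpow_ae_eq s T y _)]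

/-- Type `p` of `L_p` for `p ≤ 2`, in its averaged form. -/
lemma MeasureTheory.Lp.sum_powerset_norm_signSum_rpow_le (hp0 : p ≠ 0) (hp2 : p ≤ 2) (s : Finset ι)
    (y : ι → Lp ℝ p μ) :
    ∑ T ∈ s.powerset, ‖signSum s T y‖ ^ p.toReal ≤ 2 ^ #s * ∑ i ∈ s, ‖y i‖ ^ p.toReal := by
  have hp : p ≠ ∞ := ne_top_of_le_ne_top ENNReal.ofNat_ne_top hp2
  have hq2 : p.toReal ≤ 2 := by simpa using ENNReal.toReal_mono ENNReal.ofNat_ne_top hp2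
  simp_rw [sum_powerset_norm_signSum_rpow_eq_integral hp0 hp,
    Lp.norm_rpow_toReal_eq_integral hp0 hp]
  rw [← integral_finsetSum _ fun i _ => (Lp.memLp (y i)).integrable_norm_rpow hp0 hp,
    ← integral_const_mul]
  refine integral_mono_of_nonneg (ae_of_all _ fun ω => by positivity)
    ((integrable_finsetSum _ fun i _ =>
      (Lp.memLp (y i)).integrable_norm_rpow hp0 hp).const_mul _) (ae_of_all _ fun ω => ?_)
  simpa only [Real.norm_eq_abs] using
    sum_powerset_abs_signSum_rpow_le s (y · ω) (ENNReal.toReal_pos hp0 hp) hq2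

lemma MeasureTheory.Lp.two_pow_mul_sum_setIntegral_le_sum_powerset (hp1 : 1 ≤ p) (hp : p ≠ ∞)
    (s : Finset ι) (y : ι → Lp ℝ p μ) {S : ι → Set Ω} (hS : ∀ i, MeasurableSet (S i))
    (hdisj : (s : Set ι).PairwiseDisjoint S) :
    2 ^ #s * ∑ i ∈ s, ∫ ω in S i, ‖y i ω‖ ^ p.toReal ∂μ
      ≤ ∑ T ∈ s.powerset, ‖signSum s T y‖ ^ p.toReal := by
  have hp0 : p ≠ 0 := (zero_lt_one.trans_le hp1).ne'
  have hq : 1 ≤ p.toReal := by simpa using ENNReal.toReal_mono hp hp1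
  have hint : ∀ i, Integrable (fun ω => 2 ^ #s * ‖y i ω‖ ^ p.toReal) μ := fun i =>
    ((Lp.memLp (y i)).integrable_norm_rpow hp0 hp).const_mul _
  simp_rw [mul_sum, ← integral_const_mul, ← integral_indicator (hS _)]
  rw [← integral_finsetSum _ fun i _ => (hint i).indicator (hS i),
    sum_powerset_norm_signSum_rpow_eq_integral hp0 hp]
  refine integral_mono_of_nonneg (ae_of_all _ fun ω => ?_)
    (integrable_finsetSum _ fun T _ => integrable_abs_signSum_rpow hp0 hp s T y)
    (ae_of_all _ fun ω => ?_)
  · exact sum_nonneg fun i _ => Set.indicator_nonneg (fun _ _ => by positivity) _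
  · refine sum_indicator_apply_le_of_pairwiseDisjoint hdisj (fun i hi _ => ?_) (by positivity)
    simpa only [Real.norm_eq_abs] using two_pow_mul_abs_rpow_le_sum_powerset s hi (y · ω) hq

end Lp

section Unconditional

variable {A E : Type*} [NormedAddCommGroup E] [NormedSpace ℝ E]

def UnconditionalWith (C : ℝ) (x : A → E) : Prop :=
  ∀ (s : Finset A) (a : A → ℝ) (sgn : A → ℝ), (∀ α, sgn α = 1 ∨ sgn α = -1) →
    ‖∑ α ∈ s, sgn α • a α • x α‖ ≤ C * ‖∑ α ∈ s, a α • x α‖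

variable {C : ℝ} {x : A → E}

lemma UnconditionalWith.mono (h : UnconditionalWith C x) {K : ℝ} (hCK : C ≤ K) :
    UnconditionalWith K x :=
  fun s a sgn hsgn => (h s a sgn hsgn).trans (mul_le_mul_of_nonneg_right hCK (norm_nonneg _))

variable [DecidableEq A]

lemma UnconditionalWith.norm_signSum_le (h : UnconditionalWith C x) (s T : Finset A)
    (a : A → ℝ) : ‖signSum s T (fun α => a α • x α)‖ ≤ C * ‖∑ α ∈ s, a α • x α‖ :=
  h s a (signOf T) (signOf_eq_one_or_eq_neg_one T)

lemma UnconditionalWith.norm_sum_le (h : UnconditionalWith C x) (s T : Finset A) (a : A → ℝ) :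
    ‖∑ α ∈ s, a α • x α‖ ≤ C * ‖signSum s T (fun α => a α • x α)‖ := by
  have := h s (fun α => signOf T α * a α) (signOf T) (signOf_eq_one_or_eq_neg_one T)
  simp_rw [smul_smul, ← mul_assoc, signOf_mul_self, one_mul] at this
  simpa only [signSum, smul_smul] using this

end Unconditional

section LpEstimates

variable {Ω A : Type*} [MeasurableSpace Ω] {μ : Measure Ω} {p : ℝ≥0∞} [Fact (1 ≤ p)]
  [DecidableEq A] {C : ℝ} {x : A → Lp ℝ p μ}

lemma UnconditionalWith.norm_sum_rpow_le (h : UnconditionalWith C x) (hC : 0 ≤ C) (hp2 : p ≤ 2)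
    (hx : ∀ α, ‖x α‖ ≤ 1) (s : Finset A) (a : A → ℝ) :
    ‖∑ α ∈ s, a α • x α‖ ^ p.toReal ≤ C ^ p.toReal * ∑ α ∈ s, |a α| ^ p.toReal := by
  have hp0 : p ≠ 0 := (zero_lt_one.trans_le Fact.out).ne'
  rw [← mul_le_mul_iff_right₀ (by positivity : (0 : ℝ) < 2 ^ #s)]
  calc 2 ^ #s * ‖∑ α ∈ s, a α • x α‖ ^ p.toReal
      = ∑ _T ∈ s.powerset, ‖∑ α ∈ s, a α • x α‖ ^ p.toReal := by simp
    _ ≤ ∑ T ∈ s.powerset, (C * ‖signSum s T (fun α => a α • x α)‖) ^ p.toReal := by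
        gcongr with T; exact h.norm_sum_le s T a
    _ = C ^ p.toReal * ∑ T ∈ s.powerset, ‖signSum s T (fun α => a α • x α)‖ ^ p.toReal := by
        simp_rw [Real.mul_rpow hC (norm_nonneg _), mul_sum]
    _ ≤ C ^ p.toReal * (2 ^ #s * ∑ α ∈ s, ‖a α • x α‖ ^ p.toReal) := by
        gcongr; exact Lp.sum_powerset_norm_signSum_rpow_le hp0 hp2 s _
    _ ≤ 2 ^ #s * (C ^ p.toReal * ∑ α ∈ s, |a α| ^ p.toReal) := by
        rw [mul_left_comm]
        gcongr with α
        rw [norm_smul, Real.norm_eq_abs]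
        exact mul_le_of_le_one_right (abs_nonneg _) (hx α)

lemma UnconditionalWith.rpow_mul_sum_le_norm_sum_rpow (h : UnconditionalWith C x) (hC : 0 ≤ C)
    (hp : p ≠ ∞) {S : A → Set Ω} (hS : ∀ α, MeasurableSet (S α))
    (hdisj : Pairwise (Function.onFun Disjoint S)) {ε : ℝ} (hε : 0 ≤ ε)
    (hbig : ∀ α, ENNReal.ofReal ε < eLpNorm ((S α).indicator (x α)) p μ) (s : Finset A)
    (a : A → ℝ) :
    ε ^ p.toReal * ∑ α ∈ s, |a α| ^ p.toReal
      ≤ C ^ p.toReal * ‖∑ α ∈ s, a α • x α‖ ^ p.toReal := by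
  have hp0 : p ≠ 0 := (zero_lt_one.trans_le Fact.out).ne'
  rw [← mul_le_mul_iff_right₀ (by positivity : (0 : ℝ) < 2 ^ #s)]
  calc 2 ^ #s * (ε ^ p.toReal * ∑ α ∈ s, |a α| ^ p.toReal)
      ≤ 2 ^ #s * ∑ α ∈ s, ∫ ω in S α, ‖(a α • x α) ω‖ ^ p.toReal ∂μ := by
        rw [mul_sum]
        gcongr with α
        rw [Lp.setIntegral_norm_smul_rpow, mul_comm]
        gcongr
        exact (Lp.rpow_lt_setIntegral_norm_rpow hp0 hp _ (hS α) hε (hbig α)).le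
    _ ≤ ∑ T ∈ s.powerset, ‖signSum s T (fun α => a α • x α)‖ ^ p.toReal :=
        Lp.two_pow_mul_sum_setIntegral_le_sum_powerset Fact.out hp s _ hS (hdisj.set_pairwise _)
    _ ≤ ∑ _T ∈ s.powerset, (C * ‖∑ α ∈ s, a α • x α‖) ^ p.toReal := by
        gcongr with T; exact h.norm_signSum_le s T a
    _ = 2 ^ #s * (C ^ p.toReal * ‖∑ α ∈ s, a α • x α‖ ^ p.toReal) := by
        simp [Real.mul_rpow hC (norm_nonneg _)]

end LpEstimates

theorem stmt5_general (p : ℝ≥0∞) [Fact (1 ≤ p)] (hp2 : p < 2)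
    (Ω : Type*) [MeasurableSpace Ω] (μ : Measure Ω)
    (A : Type*) (x : A → Lp ℝ p μ) (hx : ∀ α, ‖x α‖ = 1)
    (S : A → Set Ω) (hSm : ∀ α, MeasurableSet (S α))
    (hdisj : Pairwise (Function.onFun Disjoint S))
    (ε : ℝ) (hε : 0 < ε)
    (hbig : ∀ α, ENNReal.ofReal ε < eLpNorm ((S α).indicator (x α : Ω → ℝ)) p μ)
    (C : ℝ)
    (huncond : ∀ (s : Finset A) (a : A → ℝ) (sgn : A → ℝ), (∀ α, sgn α = 1 ∨ sgn α = -1) →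
      ‖∑ α ∈ s, sgn α • a α • x α‖ ≤ C * ‖∑ α ∈ s, a α • x α‖) :
    ∃ c C' : ℝ, 0 < c ∧ 0 < C' ∧ ∀ (s : Finset A) (a : A → ℝ),
      c * (∑ α ∈ s, |a α| ^ p.toReal) ^ (1 / p.toReal) ≤ ‖∑ α ∈ s, a α • x α‖ ∧
      ‖∑ α ∈ s, a α • x α‖ ≤ C' * (∑ α ∈ s, |a α| ^ p.toReal) ^ (1 / p.toReal) := by
  classical
  have hq : 0 < p.toReal :=
    ENNReal.toReal_pos (zero_lt_one.trans_le Fact.out).ne' (ne_top_of_lt hp2)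
  have hK : UnconditionalWith (max C 1) x := UnconditionalWith.mono huncond (le_max_left C 1)
  have hK0 : 0 < max C 1 := lt_max_of_lt_right one_pos
  refine ⟨ε / max C 1, max C 1, div_pos hε hK0, hK0, fun s a => ⟨?_, ?_⟩⟩
  · exact Real.div_mul_rpow_one_div_le_of_rpow_mul_le hε.le hK0 (norm_nonneg _) (by positivity) hq
      (hK.rpow_mul_sum_le_norm_sum_rpow hK0.le (ne_top_of_lt hp2) hSm hdisj hε.le hbig s a)
  · exact Real.le_mul_rpow_one_div_of_rpow_le (norm_nonneg _) hK0.le (by positivity) hq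
      (hK.norm_sum_rpow_le hK0.le hp2.le (fun α => (hx α).le) s a)

/-- For `1 ≤ p < 2`, a `C`-unconditional family of unit vectors in `L_p(μ)` having big disjoint
pieces (`‖x_α 1_{Ω_α}‖ > ε` on pairwise disjoint sets `Ω_α`) is equivalent to the unit vector
basis of `ℓ_p(A)`. -/
theorem stmt5 (p : ℝ≥0∞) (hp1 : 1 ≤ p) [Fact (1 ≤ p)] (hp2 : p < 2)
    (Ω : Type*) [MeasurableSpace Ω] (μ : Measure Ω)
    (A : Type*) (x : A → Lp ℝ p μ) (hx : ∀ α, ‖x α‖ = 1)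
    (S : A → Set Ω) (hSm : ∀ α, MeasurableSet (S α))
    (hdisj : Pairwise (Function.onFun Disjoint S))
    (ε : ℝ) (hε : 0 < ε)
    (hbig : ∀ α, ENNReal.ofReal ε < eLpNorm ((S α).indicator (x α : Ω → ℝ)) p μ)
    (C : ℝ)
    (huncond : ∀ (s : Finset A) (a : A → ℝ) (sgn : A → ℝ), (∀ α, sgn α = 1 ∨ sgn α = -1) →
      ‖∑ α ∈ s, sgn α • a α • x α‖ ≤ C * ‖∑ α ∈ s, a α • x α‖) :
    ∃ c C' : ℝ, 0 < c ∧ 0 < C' ∧ ∀ (s : Finset A) (a : A → ℝ),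
      c * (∑ α ∈ s, |a α| ^ p.toReal) ^ (1 / p.toReal) ≤ ‖∑ α ∈ s, a α • x α‖ ∧
      ‖∑ α ∈ s, a α • x α‖ ≤ C' * (∑ α ∈ s, |a α| ^ p.toReal) ^ (1 / p.toReal) :=
  stmt5_general p hp2 Ω μ A x hx S hSm hdisj ε hε hbig C huncond
end

section
/- Let X be a reflexive Banach space and let (P_F)_{F} be a net of bounded linear projections onto subspaces Y_F of X, indexed by the finite subsets F of a set A directed by inclusion, with sup_F ‖P_F‖ = C < ∞, each Y_F = span{y_α : α ∈ F} for a fixed family (y_α)_{α ∈ A}, and P_F y_α = y_α whenever α ∈ F. Then there exists a bounded linear projection P on X with ‖P‖ ≤ C whose range is the closed linear span of {y_α : α ∈ A}, obtained as a weak operator topology cluster point of the net (P_F). -/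
/-!
Reflexivity makes closed balls weakly compact (Banach–Alaoglu in the bidual), so along an
ultrafilter finer than `atTop` on the finite subsets of `A` every orbit `P F z` has a weak limit
`Q z`. Uniqueness of weak limits makes `Q` linear, and the bound `‖P F z‖ ≤ C ‖z‖` passes to the
limit. Since `P F (y α) = y α` eventually, `Q` fixes every `y α`, hence the closed span `Y`; and
`Q z ∈ Y` because the closed subspace `Y` is weakly closed. So `Q` is a projection onto `Y`.
-/

open Filter Topology Metric

section

variable {X : Type*} [NormedAddCommGroup X] [NormedSpace ℝ X]

theorem isCompact_toWeakSpace_closedBall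
    (hrefl : Function.Surjective (NormedSpace.inclusionInDoubleDual ℝ X)) (x : X) (R : ℝ) :
    IsCompact (toWeakSpace ℝ X '' closedBall x R) := by
  rw [← isClosed_closedBall.closure_eq, (convex_closedBall x R).toWeakSpace_closure ℝ]
  refine NormedSpace.isCompact_closure_of_isBounded ℝ X _ ?_ ?_
  · exact (toWeakSpace ℝ X).preimage_image _ ▸ isBounded_closedBall
  · rintro φ -
    exact hrefl φ

theorem exists_norm_le_tendsto_toWeakSpace
    (hrefl : Function.Surjective (NormedSpace.inclusionInDoubleDual ℝ X)) {ι : Type*}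
    (U : Ultrafilter ι) (x : ι → X) {R : ℝ} (hx : ∀ i, ‖x i‖ ≤ R) :
    ∃ x₀ : X, ‖x₀‖ ≤ R ∧ Tendsto (fun i => toWeakSpace ℝ X (x i)) U (𝓝 (toWeakSpace ℝ X x₀)) := by
  have hU : (U.map fun i => toWeakSpace ℝ X (x i) : Filter (WeakSpace ℝ X)) ≤
      𝓟 (toWeakSpace ℝ X '' closedBall 0 R) :=
    le_principal_iff.2 <| mem_map.2 <| univ_mem' fun i => ⟨x i, by simpa using hx i, rfl⟩
  obtain ⟨_, ⟨x₀, hx₀, rfl⟩, hlim⟩ :=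
    (isCompact_toWeakSpace_closedBall hrefl 0 R).ultrafilter_le_nhds _ hU
  exact ⟨x₀, by simpa using hx₀, hlim⟩

theorem Submodule.mem_of_tendsto_toWeakSpace {Y : Submodule ℝ X} (hY : IsClosed (Y : Set X))
    {ι : Type*} {l : Filter ι} [l.NeBot] {x : ι → X} {x₀ : X}
    (hxY : ∀ᶠ i in l, x i ∈ Y)
    (hlim : Tendsto (fun i => toWeakSpace ℝ X (x i)) l (𝓝 (toWeakSpace ℝ X x₀))) :
    x₀ ∈ Y := by
  have hweak : IsClosed (toWeakSpace ℝ X '' Y) := by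
    rw [← hY.closure_eq, Y.convex.toWeakSpace_closure ℝ]
    exact isClosed_closure
  obtain ⟨_, hx₀, h⟩ := hweak.mem_of_tendsto hlim (hxY.mono fun i hi => ⟨x i, hi, rfl⟩)
  exact (toWeakSpace ℝ X).injective h ▸ hx₀

theorem exists_opNorm_le_tendsto_toWeakSpace_apply
    (hrefl : Function.Surjective (NormedSpace.inclusionInDoubleDual ℝ X)) {ι : Type*}
    (U : Ultrafilter ι) (T : ι → X →L[ℝ] X) {C : ℝ} (hT : ∀ i, ‖T i‖ ≤ C) :
    ∃ Q : X →L[ℝ] X, ‖Q‖ ≤ C ∧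
      ∀ z, Tendsto (fun i => toWeakSpace ℝ X (T i z)) U (𝓝 (toWeakSpace ℝ X (Q z))) := by
  choose Q hQC hQ using fun z => exists_norm_le_tendsto_toWeakSpace hrefl U (fun i => T i z)
    fun i => (T i).le_of_opNorm_le (hT i) z
  have map_add (z w : X) : Q (z + w) = Q z + Q w :=
    (toWeakSpace ℝ X).injective <| tendsto_nhds_unique (hQ (z + w)) <| by
      simpa only [map_add] using (hQ z).add (hQ w)
  have map_smul (c : ℝ) (z : X) : Q (c • z) = c • Q z :=
    (toWeakSpace ℝ X).injective <| tendsto_nhds_unique (hQ (c • z)) <| by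
      simpa only [map_smul] using (hQ z).const_smul c
  obtain ⟨i, -⟩ := (U : Filter ι).nonempty_of_mem univ_mem
  exact ⟨(LinearMap.mk ⟨Q, map_add⟩ map_smul).mkContinuous C hQC,
    LinearMap.mkContinuous_norm_le _ ((norm_nonneg _).trans (hT i)) _, hQ⟩

end

theorem stmt12_general (X : Type*) [NormedAddCommGroup X] [NormedSpace ℝ X]
    (hrefl : Function.Surjective (NormedSpace.inclusionInDoubleDual ℝ X))
    (A : Type*) (y : A → X) (P : Finset A → X →L[ℝ] X) (C : ℝ)
    (hC : ∀ F, ‖P F‖ ≤ C)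
    (hrange : ∀ (F : Finset A) (z : X), P F z ∈ Submodule.span ℝ (y '' ↑F))
    (hfix : ∀ F, ∀ α ∈ F, P F (y α) = y α) :
    ∃ Q : X →L[ℝ] X, ‖Q‖ ≤ C ∧ (∀ z, Q (Q z) = Q z) ∧ (∀ α, Q (y α) = y α) ∧
      LinearMap.range (Q : X →ₗ[ℝ] X) = (Submodule.span ℝ (Set.range y)).topologicalClosure := by
  let U : Ultrafilter (Finset A) := .of atTop
  obtain ⟨Q, hQC, hQ⟩ := exists_opNorm_le_tendsto_toWeakSpace_apply hrefl U P hC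
  set Y := (Submodule.span ℝ (Set.range y)).topologicalClosure
  have hQy (α : A) : Q (y α) = y α := by
    have hPy : ∀ᶠ F in (U : Filter (Finset A)), y α = P F (y α) :=
      Ultrafilter.of_le _ <| (eventually_ge_atTop {α}).mono fun F hF =>
        (hfix F α (Finset.singleton_subset_iff.1 hF)).symm
    exact (toWeakSpace ℝ X).injective <| tendsto_nhds_unique (hQ (y α)) <|
      tendsto_const_nhds.congr' (hPy.mono fun F hF => congrArg _ hF)
  have hQ_mem (z : X) : Q z ∈ Y :=
    Y.mem_of_tendsto_toWeakSpace (Submodule.span ℝ (Set.range y)).isClosed_topologicalClosure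
      (Eventually.of_forall fun F => Submodule.le_topologicalClosure _ <|
        Submodule.span_mono (Set.image_subset_range _ _) (hrange F z)) (hQ z)
  have hQ_fix {w : X} (hw : w ∈ Y) : Q w = w :=
    ContinuousLinearMap.eqOn_closure_span (s := Set.range y) (g := .id ℝ X)
      (by rintro _ ⟨α, rfl⟩; exact hQy α) (by rwa [← Submodule.topologicalClosure_coe])
  refine ⟨Q, hQC, fun z => hQ_fix (hQ_mem z), hQy, le_antisymm ?_ fun w hw => ⟨w, hQ_fix hw⟩⟩
  rintro _ ⟨z, rfl⟩
  exact hQ_mem z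

/-- In a reflexive Banach space, a uniformly bounded net of projections `P_F` onto the spans of
finite subfamilies of `(y_α)` (fixing the corresponding `y_α`) has a cluster point which is a
projection of norm at most `C` onto the closed span of all the `y_α`. -/
theorem stmt12 (X : Type*) [NormedAddCommGroup X] [NormedSpace ℝ X] [CompleteSpace X]
    (hrefl : Function.Surjective (NormedSpace.inclusionInDoubleDual ℝ X))
    (A : Type*) (y : A → X) (P : Finset A → X →L[ℝ] X) (C : ℝ)
    (hC : ∀ F, ‖P F‖ ≤ C)
    (hproj : ∀ F (z : X), P F (P F z) = P F z)
    (hrange : ∀ (F : Finset A) (z : X), P F z ∈ Submodule.span ℝ (y '' ↑F))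
    (hfix : ∀ F, ∀ α ∈ F, P F (y α) = y α) :
    ∃ Q : X →L[ℝ] X, ‖Q‖ ≤ C ∧ (∀ z, Q (Q z) = Q z) ∧ (∀ α, Q (y α) = y α) ∧
      LinearMap.range (Q : X →ₗ[ℝ] X) = (Submodule.span ℝ (Set.range y)).topologicalClosure :=
  stmt12_general X hrefl A y P C hC hrange hfix
end

section
/- Let 1 ≤ p < ∞ and let X be a closed subspace of the ℓ_p-direct sum L = (∑_{β ∈ B} X_β)_p of Banach spaces. Suppose that for every countable subset B' ⊂ B, the restriction projection P_{B'} is not injective on X. Then any family S of unit vectors in X that is maximal with respect to the property that supp(x) ∩ supp(y) = ∅ for distinct x, y ∈ S (where supp(x) = {β : P_β x ≠ 0}, which is countable for each x) is uncountable; consequently X contains an isometric copy of ℓ_p over an uncountable index set, spanned by S. -/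
open scoped ENNReal

/-- If for every countable `B' ⊆ B` the restriction `P_{B'}` fails to be injective on a subspace
`X` of the `ℓ_p`-sum, then any maximal family `S` of unit vectors of `X` with pairwise disjoint
supports is uncountable, and `S` spans an isometric copy of `ℓ_p(S)`. -/
theorem stmt14 (p : ℝ≥0∞) (hp : 1 ≤ p) [Fact (1 ≤ p)] (hp' : p < ⊤)
    (B : Type*) (E : B → Type*) [∀ b, NormedAddCommGroup (E b)] [∀ b, NormedSpace ℝ (E b)]
    (X : Submodule ℝ (lp E p))
    (hker : ∀ B' : Set B, B'.Countable →
      ∃ x ∈ X, x ≠ 0 ∧ ∀ b ∈ B', (x : ∀ b, E b) b = 0)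
    (S : Set (lp E p)) (hSX : S ⊆ X) (hSnorm : ∀ x ∈ S, ‖x‖ = 1)
    (hSdisj : ∀ x ∈ S, ∀ y ∈ S, x ≠ y → ∀ b, (x : ∀ b, E b) b = 0 ∨ (y : ∀ b, E b) b = 0)
    (hmax : ∀ z : lp E p, z ∈ X → ‖z‖ = 1 →
      (∀ x ∈ S, ∀ b, (x : ∀ b, E b) b = 0 ∨ (z : ∀ b, E b) b = 0) → z ∈ S) :
    ¬ S.Countable ∧
      ∀ (s : Finset (lp E p)), ↑s ⊆ S → ∀ a : lp E p → ℝ,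
        ‖∑ x ∈ s, a x • x‖ = (∑ x ∈ s, |a x| ^ p.toReal) ^ (1 / p.toReal) := by
  have hpt : 0 < p.toReal := ENNReal.toReal_pos (by intro h; rw [h] at hp; simp at hp) hp'.ne
  -- countable support
  have hsupp : ∀ x : lp E p, {b | (x : ∀ b, E b) b ≠ 0}.Countable := by
    intro x
    have hs : Summable fun b => ‖(x : ∀ b, E b) b‖ ^ p.toReal := (lp.memℓp x).summable hpt
    have := hs.countable_support
    refine this.mono ?_
    intro b hb
    exact ne_of_gt (Real.rpow_pos_of_pos (norm_pos_iff.mpr hb) _)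
  constructor
  · intro hc
    set B' : Set B := ⋃ x ∈ S, {b | (x : ∀ b, E b) b ≠ 0} with hB'
    have hB'c : B'.Countable := hc.biUnion fun x _ => hsupp x
    obtain ⟨x, hxX, hx0, hxz⟩ := hker B' hB'c
    set z : lp E p := ‖x‖⁻¹ • x with hz
    have hzn : ‖z‖ = 1 := norm_smul_inv_norm hx0
    have hzz : ∀ b, (z : ∀ b, E b) b = ‖x‖⁻¹ • (x : ∀ b, E b) b := by
      intro b; rw [hz, lp.coeFn_smul]; rfl
    have hdisj : ∀ y ∈ S, ∀ b, (y : ∀ b, E b) b = 0 ∨ (z : ∀ b, E b) b = 0 := by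
      intro y hy b
      by_cases h : (y : ∀ b, E b) b = 0
      · exact Or.inl h
      · refine Or.inr ?_
        rw [hzz, hxz b (Set.mem_biUnion hy h), smul_zero]
    have hzS : z ∈ S := hmax z (X.smul_mem _ hxX) hzn hdisj
    have : ∀ b, (z : ∀ b, E b) b = 0 := fun b => (hdisj z hzS b).elim id id
    have hz0 : z = 0 := by
      ext b; exact this b
    rw [hz0, norm_zero] at hzn
    norm_num at hzn
  · intro s hs a
    -- key : at most one x ∈ s is nonzero at b
    have key : ∀ b : B, ∀ x ∈ s, ∀ y ∈ s, ((x : ∀ b, E b) b ≠ 0) → ((y : ∀ b, E b) b ≠ 0) → x = y := by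
      intro b x hx y hy hxb hyb
      by_contra hne
      rcases hSdisj x (hs hx) y (hs hy) hne b with h | h
      exacts [hxb h, hyb h]
    set f : lp E p := ∑ x ∈ s, a x • x with hf
    have hfb : ∀ b, (f : ∀ b, E b) b = ∑ x ∈ s, a x • (x : ∀ b, E b) b := by
      intro b
      rw [hf, lp.coeFn_sum, Finset.sum_apply]
      refine Finset.sum_congr rfl fun x _ => ?_
      rw [lp.coeFn_smul]; rfl
    have hterm : ∀ b, ‖(f : ∀ b, E b) b‖ ^ p.toReal
        = ∑ x ∈ s, (|a x| * ‖(x : ∀ b, E b) b‖) ^ p.toReal := by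
      intro b
      by_cases hex : ∃ x ∈ s, (x : ∀ b, E b) b ≠ 0
      · obtain ⟨x₀, hx₀, hx₀b⟩ := hex
        have h1 : (f : ∀ b, E b) b = a x₀ • (x₀ : ∀ b, E b) b := by
          rw [hfb]
          refine Finset.sum_eq_single_of_mem x₀ hx₀ fun y hy hne => ?_
          by_cases h : (y : ∀ b, E b) b = 0
          · rw [h, smul_zero]
          · exact absurd (key b y hy x₀ hx₀ h hx₀b) hne
        rw [h1, Finset.sum_eq_single_of_mem x₀ hx₀, norm_smul]
        · simp [Real.norm_eq_abs]
        · intro y hy hne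
          have h : (y : ∀ b, E b) b = 0 := by
            by_contra h
            exact hne (key b y hy x₀ hx₀ h hx₀b)
          rw [h, norm_zero, mul_zero, Real.zero_rpow hpt.ne']
      · push_neg at hex
        have h1 : (f : ∀ b, E b) b = 0 := by
          rw [hfb]
          exact Finset.sum_eq_zero fun x hx => by rw [hex x hx, smul_zero]
        rw [h1, norm_zero, Real.zero_rpow hpt.ne']
        symm
        exact Finset.sum_eq_zero fun x hx => by
          rw [hex x hx, norm_zero, mul_zero, Real.zero_rpow hpt.ne']
    have hsum : ∀ x : lp E p, Summable fun b => (|a x| * ‖(x : ∀ b, E b) b‖) ^ p.toReal := by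
      intro x
      have hx := (lp.memℓp x).summable hpt
      have := hx.mul_left (|a x| ^ p.toReal)
      refine this.congr fun b => ?_
      rw [Real.mul_rpow (abs_nonneg _) (norm_nonneg _)]
    have htsum : (∑' b, ‖(f : ∀ b, E b) b‖ ^ p.toReal) = ∑ x ∈ s, |a x| ^ p.toReal := by
      calc (∑' b, ‖(f : ∀ b, E b) b‖ ^ p.toReal)
          = ∑' b, ∑ x ∈ s, (|a x| * ‖(x : ∀ b, E b) b‖) ^ p.toReal := by
            exact tsum_congr hterm
        _ = ∑ x ∈ s, ∑' b, (|a x| * ‖(x : ∀ b, E b) b‖) ^ p.toReal :=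
            Summable.tsum_finsetSum fun x _ => hsum x
        _ = ∑ x ∈ s, |a x| ^ p.toReal := by
            refine Finset.sum_congr rfl fun x hx => ?_
            have : (∑' b, (|a x| * ‖(x : ∀ b, E b) b‖) ^ p.toReal)
                = |a x| ^ p.toReal * ∑' b, ‖(x : ∀ b, E b) b‖ ^ p.toReal := by
              rw [← tsum_mul_left]
              exact tsum_congr fun b => Real.mul_rpow (abs_nonneg _) (norm_nonneg _)
            rw [this, ← lp.norm_rpow_eq_tsum hpt, hSnorm x (hs hx), Real.one_rpow, mul_one]
    rw [lp.norm_eq_tsum_rpow hpt, htsum]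
end
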